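/- The infimum of g(A) over all generalized Mahalanobis operators A on H equals the infimum of g_V(B) over all generalized Mahalanobis operators B on V. -/

import Mathlib

open scoped RealInnerProductSpace

/-- A continuous linear operator on a real inner product space is a *generalized Mahalanobis
operator* if it is self-adjoint and positive definite. -/
def IsGenMahalanobis {H : Type*} [NormedAddCommGroup H] [InnerProductSpace ℝ H]
    (A : H →L[ℝ] H) : Prop :=
  (∀ x y : H, ⟪A x, y⟫ = ⟪x, A y⟫) ∧ ∀ x : H, x ≠ 0 → 0 < ⟪A x, x⟫

/-- A linear operator on a (subspace viewed as an) inner product space is a *generalized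
Mahalanobis operator* if it is self-adjoint and positive definite. -/
def IsGenMahalanobisLin {V : Type*} [NormedAddCommGroup V] [InnerProductSpace ℝ V]
    (B : V →ₗ[ℝ] V) : Prop :=
  (∀ x y : V, ⟪B x, y⟫ = ⟪x, B y⟫) ∧ ∀ x : V, x ≠ 0 → 0 < ⟪B x, x⟫

/-- The triplet-comparison empirical objective
`g(A) = Σ_i ℓ (sgn (‖z^i_1 - z^i_2‖_A - ‖z^i_1 - z^i_3‖_A)) (y i)`,
where `‖x‖_A = √⟪A x, x⟫`. -/
noncomputable def tripObj {H : Type*} [NormedAddCommGroup H] [InnerProductSpace ℝ H]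
    {n : ℕ} (ℓ : ℝ → ℝ → ℝ) (z₁ z₂ z₃ : Fin n → H) (y : Fin n → ℝ)
    (A : H → H) : ℝ :=
  ∑ i, ℓ (Real.sign (Real.sqrt ⟪A (z₁ i - z₂ i), z₁ i - z₂ i⟫ -
      Real.sqrt ⟪A (z₁ i - z₃ i), z₁ i - z₃ i⟫)) (y i)

/-!
The objective only sees `⟪A v, v⟫` for `v ∈ V`. Compressing `A` to `P_V A|_V` and, conversely,
extending `B` by the identity on `Vᗮ` both preserve this quadratic form on `V` and map generalized
Mahalanobis operators to generalized Mahalanobis operators, so the two sets of objective values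
coincide.
-/

namespace Submodule

variable {H : Type*} [NormedAddCommGroup H] [InnerProductSpace ℝ H] (V : Submodule ℝ H)

lemma tripObj_coe_eq_of_inner_self_eq {n : ℕ} (ℓ : ℝ → ℝ → ℝ) (w₁ w₂ w₃ : Fin n → V)
    (y : Fin n → ℝ) {A : H → H} {B : V → V} (hAB : ∀ v : V, ⟪A v, v⟫ = ⟪B v, v⟫) :
    tripObj ℓ (fun i => (w₁ i : H)) (fun i => (w₂ i : H)) (fun i => (w₃ i : H)) y A =
      tripObj ℓ w₁ w₂ w₃ y B := by
  simp only [tripObj, ← hAB, AddSubgroupClass.coe_sub]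

section Compression

variable [V.HasOrthogonalProjection]

noncomputable def compression (A : H →L[ℝ] H) : V →ₗ[ℝ] V :=
  (V.orthogonalProjectionOnto ∘L A ∘L V.subtypeL : V →L[ℝ] V)

@[simp]
lemma inner_compression_apply (A : H →L[ℝ] H) (v w : V) :
    ⟪V.compression A v, w⟫ = ⟪A v, w⟫ := by
  simp [compression]

lemma isGenMahalanobisLin_compression {A : H →L[ℝ] H} (hA : IsGenMahalanobis A) :
    IsGenMahalanobisLin (V.compression A) := by
  refine ⟨fun v w => ?_, fun v hv => ?_⟩
  · rw [inner_compression_apply, real_inner_comm _ v, inner_compression_apply,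
      hA.1, real_inner_comm]
  · rw [inner_compression_apply]
    exact hA.2 v (by simpa using hv)

end Compression

section Extension

variable [FiniteDimensional ℝ V]

noncomputable def extendByIdOrthogonal (B : V →ₗ[ℝ] V) : H →L[ℝ] H :=
  V.subtypeL ∘L LinearMap.toContinuousLinearMap B ∘L V.orthogonalProjectionOnto +
    Vᗮ.starProjection

lemma inner_extendByIdOrthogonal_apply (B : V →ₗ[ℝ] V) (x z : H) :
    ⟪V.extendByIdOrthogonal B x, z⟫ =
      ⟪B (V.orthogonalProjectionOnto x), V.orthogonalProjectionOnto z⟫ +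
        ⟪Vᗮ.starProjection x, z⟫ := by
  simp [extendByIdOrthogonal, inner_add_left]

@[simp]
lemma inner_extendByIdOrthogonal_apply_coe (B : V →ₗ[ℝ] V) (v w : V) :
    ⟪V.extendByIdOrthogonal B v, w⟫ = ⟪B v, w⟫ := by
  simp [inner_extendByIdOrthogonal_apply]

lemma isGenMahalanobis_extendByIdOrthogonal {B : V →ₗ[ℝ] V} (hB : IsGenMahalanobisLin B) :
    IsGenMahalanobis (V.extendByIdOrthogonal B) := by
  refine ⟨fun x z => ?_, fun x hx => ?_⟩
  · rw [inner_extendByIdOrthogonal_apply, real_inner_comm _ x, inner_extendByIdOrthogonal_apply,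
      hB.1, real_inner_comm _ (V.orthogonalProjectionOnto x), inner_starProjection_left_eq_right,
      real_inner_comm x]
  · rw [inner_extendByIdOrthogonal_apply]
    rcases eq_or_ne (V.orthogonalProjectionOnto x) 0 with hP | hP
    · have hx_orth : x ∈ Vᗮ :=
        V.starProjection_apply_eq_zero_iff.1 (by simp [starProjection_apply, hP])
      rw [hP, map_zero, inner_zero_left, zero_add, starProjection_eq_self_iff.2 hx_orth]
      exact real_inner_self_pos.2 hx
    · have hBpos := hB.2 _ hP
      have hQnonneg : 0 ≤ ⟪Vᗮ.starProjection x, x⟫ := Vᗮ.re_inner_starProjection_nonneg x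
      linarith

end Extension

end Submodule

theorem triplet_infimum_eq_subspace_infimum_general
    {H : Type*} [NormedAddCommGroup H] [InnerProductSpace ℝ H]
    (V : Submodule ℝ H) [FiniteDimensional ℝ V]
    {n : ℕ} (ℓ : ℝ → ℝ → ℝ) (z₁ z₂ z₃ : Fin n → H) (y : Fin n → ℝ)
    (hz₁ : ∀ i, z₁ i ∈ V) (hz₂ : ∀ i, z₂ i ∈ V) (hz₃ : ∀ i, z₃ i ∈ V) :
    sInf {r : ℝ | ∃ A : H →L[ℝ] H, IsGenMahalanobis A ∧ r = tripObj ℓ z₁ z₂ z₃ y ⇑A} =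
      sInf {r : ℝ | ∃ B : V →ₗ[ℝ] V, IsGenMahalanobisLin B ∧
        r = tripObj ℓ (fun i => (⟨z₁ i, hz₁ i⟩ : V)) (fun i => (⟨z₂ i, hz₂ i⟩ : V))
          (fun i => (⟨z₃ i, hz₃ i⟩ : V)) y ⇑B} := by
  set w₁ : Fin n → V := fun i => ⟨z₁ i, hz₁ i⟩
  set w₂ : Fin n → V := fun i => ⟨z₂ i, hz₂ i⟩
  set w₃ : Fin n → V := fun i => ⟨z₃ i, hz₃ i⟩
  congr 1
  ext r
  constructor
  · rintro ⟨A, hA, rfl⟩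
    exact ⟨V.compression A, V.isGenMahalanobisLin_compression hA,
      V.tripObj_coe_eq_of_inner_self_eq ℓ w₁ w₂ w₃ y fun v =>
        (V.inner_compression_apply A v v).symm⟩
  · rintro ⟨B, hB, rfl⟩
    exact ⟨V.extendByIdOrthogonal B, V.isGenMahalanobis_extendByIdOrthogonal hB,
      (V.tripObj_coe_eq_of_inner_self_eq ℓ w₁ w₂ w₃ y fun v =>
        V.inner_extendByIdOrthogonal_apply_coe B v v).symm⟩

/-- The infimum of the triplet objective `g` over generalized Mahalanobis
operators on `H` equals the infimum of `g_V` over generalized Mahalanobis operators on `V`. -/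
theorem triplet_infimum_eq_subspace_infimum
    {H : Type*} [NormedAddCommGroup H] [InnerProductSpace ℝ H] [CompleteSpace H]
    (V : Submodule ℝ H) [FiniteDimensional ℝ V]
    {n : ℕ} (ℓ : ℝ → ℝ → ℝ) (z₁ z₂ z₃ : Fin n → H) (y : Fin n → ℝ)
    (hz₁ : ∀ i, z₁ i ∈ V) (hz₂ : ∀ i, z₂ i ∈ V) (hz₃ : ∀ i, z₃ i ∈ V)
    (hy : ∀ i, y i = 1 ∨ y i = -1) :
    sInf {r : ℝ | ∃ A : H →L[ℝ] H, IsGenMahalanobis A ∧ r = tripObj ℓ z₁ z₂ z₃ y ⇑A} =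
      sInf {r : ℝ | ∃ B : V →ₗ[ℝ] V, IsGenMahalanobisLin B ∧
        r = tripObj ℓ (fun i => (⟨z₁ i, hz₁ i⟩ : V)) (fun i => (⟨z₂ i, hz₂ i⟩ : V))
          (fun i => (⟨z₃ i, hz₃ i⟩ : V)) y ⇑B} :=
  triplet_infimum_eq_subspace_infimum_general V ℓ z₁ z₂ z₃ y hz₁ hz₂ hz₃
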